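/- arXiv:1209.1849 — 2 statements merged into one kernel-verified Lean document; each statement's English description precedes it below -/
import Mathlib

section
/- Let n ≥ 1, let Ω be a real invertible antisymmetric 2n×2n matrix, and let a ∈ 𝒮(ℝ^{2n}). Define K(z,u) = (2/π)^n |det Ω|^{-1/2} F_ω a(2(z−u)) e^{2iω(z,u)} (the kernel of the phase-space operator Ã_ω). Then the Weyl symbol of Ã_ω, obtained from the kernel by the partial Fourier transform in the second variable, equals a(z − (1/2)Ωζ): for all z, ζ ∈ ℝ^{2n}, ∫_{ℝ^{2n}} e^{-iζ·ζ'} K(z + ζ'/2, z − ζ'/2) dζ' = a(z − (1/2)Ωζ). -/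
open MeasureTheory Matrix

/-- The symplectic form associated to an invertible antisymmetric matrix `Ω`. -/
noncomputable def symplForm {m : ℕ} (Ω : Matrix (Fin m) (Fin m) ℝ)
    (z z' : Fin m → ℝ) : ℝ :=
  z ⬝ᵥ (Ω⁻¹ *ᵥ z')

/-- The `ω`-symplectic Fourier transform. -/
noncomputable def Fomega {m : ℕ} (n : ℕ) (Ω : Matrix (Fin m) (Fin m) ℝ)
    (a : (Fin m → ℝ) → ℂ) (z : Fin m → ℝ) : ℂ :=
  ((((2 * Real.pi) ^ n : ℝ)⁻¹ : ℝ) : ℂ) * (((Real.sqrt |Ω.det|)⁻¹ : ℝ) : ℂ) *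
    ∫ z' : Fin m → ℝ, Complex.exp (-Complex.I * ((symplForm Ω z z' : ℝ) : ℂ)) * a z'

/-- The kernel `K(z,u) = (2/π)^n |det Ω|^{-1/2} F_ω a(2(z−u)) e^{2iω(z,u)}`
of the phase-space operator `Ã_ω`. -/
noncomputable def Akernel {m : ℕ} (n : ℕ) (Ω : Matrix (Fin m) (Fin m) ℝ)
    (a : (Fin m → ℝ) → ℂ) (z u : Fin m → ℝ) : ℂ :=
  (((2 / Real.pi) ^ n : ℝ) : ℂ) * (((Real.sqrt |Ω.det|)⁻¹ : ℝ) : ℂ) *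
    Fomega n Ω a ((2 : ℝ) • (z - u)) *
    Complex.exp (2 * Complex.I * ((symplForm Ω z u : ℝ) : ℂ))

/-
Antisymmetry of `ω` gives `ω(z + ζ'/2, z - ζ'/2) = -ω(z, ζ')` and `ζ·ζ' = -ω(Ωζ, ζ')`, so the
phase `e^{-iζ·ζ'} e^{2iω(z+ζ'/2, z-ζ'/2)}` equals `e^{-iω(z - Ωζ/2, 2ζ')}`. After the substitution
`u = 2ζ'` the integral becomes a multiple of `F_ω (F_ω a) (z - Ωζ/2)`, and `F_ω` is an involution:
writing `ω(u, z') = (uΩ⁻¹)·z'`, the linear substitution `ξ = uΩ⁻¹` (Jacobian `|det Ω|`) reduces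
`F_ω ∘ F_ω` to ordinary Fourier inversion on `ℝ^{2n}`, and the constants cancel.
-/

open FourierTransform

namespace Matrix

variable {ι R : Type*} [Fintype ι] [DecidableEq ι] [CommRing R] {A : Matrix ι ι R}

lemma transpose_inv_eq_neg_inv (hA : IsUnit A.det) (hanti : Aᵀ = -A) : A⁻¹ᵀ = -A⁻¹ := by
  rw [transpose_nonsing_inv, hanti]
  exact inv_eq_left_inv (by rw [neg_mul_neg, nonsing_inv_mul _ hA])

end Matrix

lemma integral_comp_vecMul {ι E : Type*} [Fintype ι] [DecidableEq ι] [NormedAddCommGroup E]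
    [NormedSpace ℝ E] {M : Matrix ι ι ℝ} (hM : IsUnit M.det) (g : (ι → ℝ) → E) :
    ∫ x, g (x ᵥ* M) = |M.det|⁻¹ • ∫ x, g x := by
  have hMt : (Mᵀ).det ≠ 0 := by rw [Matrix.det_transpose]; exact hM.ne_zero
  have hemb : MeasurableEmbedding (Matrix.toLin' Mᵀ) :=
    ((LinearMap.equivOfDetNeZero (Matrix.toLin' Mᵀ)
      (by rwa [LinearMap.det_toLin'])).toContinuousLinearEquiv.toHomeomorph.measurableEmbedding :)
  simp_rw [← Matrix.mulVec_transpose, ← Matrix.toLin'_apply]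
  rw [← hemb.integral_map, Real.map_matrix_volume_pi_eq_smul_volume_pi hMt, integral_smul_measure,
    ENNReal.toReal_ofReal (abs_nonneg _), abs_inv, Matrix.det_transpose]

section FourierDot

variable {m : ℕ}

noncomputable def fourierDot (f : (Fin m → ℝ) → ℂ) (ξ : Fin m → ℝ) : ℂ :=
  ∫ x, Complex.exp (-Complex.I * ((ξ ⬝ᵥ x : ℝ) : ℂ)) * f x

lemma fourierDot_eq_fourier (f : (Fin m → ℝ) → ℂ) (ξ : Fin m → ℝ) :
    fourierDot f ξ =
      𝓕 (fun y : EuclideanSpace ℝ (Fin m) => f y.ofLp) ((2 * Real.pi)⁻¹ • WithLp.toLp 2 ξ) := by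
  rw [fourierDot, Real.fourier_eq', ← (PiLp.volume_preserving_toLp (Fin m)).integral_comp
    (MeasurableEquiv.toLp 2 (Fin m → ℝ)).measurableEmbedding]
  congr 1 with x
  rw [smul_eq_mul, real_inner_smul_right, EuclideanSpace.inner_toLp_toLp, star_trivial,
    WithLp.ofLp_toLp]
  congr 2
  push_cast
  field_simp

lemma integral_exp_dotProduct_mul_fourierDot (f : SchwartzMap (Fin m → ℝ) ℂ) (x : Fin m → ℝ) :
    ∫ ξ, Complex.exp (Complex.I * ((ξ ⬝ᵥ x : ℝ) : ℂ)) * fourierDot f ξ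
      = (((2 * Real.pi) ^ m : ℝ) : ℂ) * f x := by
  set fE : SchwartzMap (EuclideanSpace ℝ (Fin m)) ℂ :=
    SchwartzMap.compCLMOfContinuousLinearEquiv ℝ (EuclideanSpace.equiv (Fin m) ℝ) f
  have hinv : 𝓕⁻ (𝓕 (fE : EuclideanSpace ℝ (Fin m) → ℂ)) (WithLp.toLp 2 x) = f x := by
    rw [← SchwartzMap.fourier_coe, ← SchwartzMap.fourierInv_coe, fourierInv_fourier_eq]
    rfl
  simp_rw [fourierDot_eq_fourier]
  rw [← (PiLp.volume_preserving_ofLp (Fin m)).integral_comp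
    (MeasurableEquiv.toLp 2 (Fin m → ℝ)).symm.measurableEmbedding]
  set F := fun y : EuclideanSpace ℝ (Fin m) => f y.ofLp
  set g := fun η : EuclideanSpace ℝ (Fin m) =>
    Complex.exp (((2 * Real.pi * inner ℝ η (WithLp.toLp 2 x) : ℝ) : ℂ) * Complex.I) • 𝓕 F η
  have hphase : ∀ y : EuclideanSpace ℝ (Fin m), Complex.exp (Complex.I * ((y.ofLp ⬝ᵥ x : ℝ) : ℂ))
      * 𝓕 F ((2 * Real.pi)⁻¹ • WithLp.toLp 2 y.ofLp) = g ((2 * Real.pi)⁻¹ • y) := by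
    intro y
    simp only [g, smul_eq_mul, WithLp.toLp_ofLp]
    rw [real_inner_smul_left, EuclideanSpace.inner_eq_star_dotProduct, WithLp.ofLp_toLp,
      star_trivial, mul_inv_cancel_left₀ Real.two_pi_pos.ne', dotProduct_comm, mul_comm Complex.I]
  simp_rw [hphase]
  rw [Measure.integral_comp_inv_smul_of_nonneg volume g Real.two_pi_pos.le,
    finrank_euclideanSpace_fin, ← Real.fourierInv_eq', Complex.real_smul]
  exact congrArg _ hinv

end FourierDot

section Symplectic

variable {m : ℕ} {Ω : Matrix (Fin m) (Fin m) ℝ}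

lemma symplForm_eq_vecMul_dotProduct (x y : Fin m → ℝ) :
    symplForm Ω x y = (x ᵥ* Ω⁻¹) ⬝ᵥ y :=
  Matrix.dotProduct_mulVec x Ω⁻¹ y

lemma symplForm_antisymm (hΩ : IsUnit Ω.det) (hanti : Ωᵀ = -Ω) (x y : Fin m → ℝ) :
    symplForm Ω x y = -symplForm Ω y x := by
  rw [symplForm_eq_vecMul_dotProduct, ← Matrix.mulVec_transpose,
    Matrix.transpose_inv_eq_neg_inv hΩ hanti, Matrix.neg_mulVec, neg_dotProduct, dotProduct_comm,
    symplForm]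

lemma symplForm_self (hΩ : IsUnit Ω.det) (hanti : Ωᵀ = -Ω) (x : Fin m → ℝ) :
    symplForm Ω x x = 0 := by
  have := symplForm_antisymm hΩ hanti x x
  linarith

lemma symplForm_mulVec_left (hΩ : IsUnit Ω.det) (hanti : Ωᵀ = -Ω) (x y : Fin m → ℝ) :
    symplForm Ω (Ω *ᵥ x) y = -(x ⬝ᵥ y) := by
  rw [symplForm, ← Matrix.vecMul_transpose, ← Matrix.dotProduct_mulVec, hanti, Matrix.neg_mulVec,
    Matrix.mulVec_mulVec, Matrix.mul_nonsing_inv _ hΩ, Matrix.one_mulVec, dotProduct_neg]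

lemma symplForm_add_smul_sub_smul (hΩ : IsUnit Ω.det) (hanti : Ωᵀ = -Ω) (z x : Fin m → ℝ) :
    symplForm Ω (z + (1/2 : ℝ) • x) (z - (1/2 : ℝ) • x) = -symplForm Ω z x := by
  have hzz := symplForm_self hΩ hanti z
  have hxx := symplForm_self hΩ hanti x
  have hxz := symplForm_antisymm hΩ hanti x z
  simp only [symplForm, Matrix.mulVec_sub, Matrix.mulVec_smul, add_dotProduct, dotProduct_sub,
    dotProduct_smul, smul_dotProduct, smul_eq_mul] at *
  linarith

lemma dotProduct_add_two_mul_symplForm (hΩ : IsUnit Ω.det) (hanti : Ωᵀ = -Ω) (z ζ x : Fin m → ℝ) :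
    ζ ⬝ᵥ x + 2 * symplForm Ω z x = symplForm Ω (z - (1/2 : ℝ) • (Ω *ᵥ ζ)) ((2 : ℝ) • x) := by
  have hζx := symplForm_mulVec_left hΩ hanti ζ x
  simp only [symplForm, Matrix.mulVec_smul, sub_dotProduct, smul_dotProduct, dotProduct_smul,
    smul_eq_mul] at *
  linarith

end Symplectic

lemma Fomega_eq_fourierDot {m : ℕ} (n : ℕ) (Ω : Matrix (Fin m) (Fin m) ℝ) (f : (Fin m → ℝ) → ℂ)
    (u : Fin m → ℝ) :
    Fomega n Ω f u = ((((2 * Real.pi) ^ n : ℝ)⁻¹ : ℝ) : ℂ) * (((Real.sqrt |Ω.det|)⁻¹ : ℝ) : ℂ) *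
      fourierDot f (u ᵥ* Ω⁻¹) := by
  simp only [Fomega, fourierDot, symplForm_eq_vecMul_dotProduct]

theorem Fomega_Fomega {n : ℕ} {Ω : Matrix (Fin (2 * n)) (Fin (2 * n)) ℝ} (hΩ : IsUnit Ω.det)
    (hanti : Ωᵀ = -Ω) (a : SchwartzMap (Fin (2 * n) → ℝ) ℂ) (w : Fin (2 * n) → ℝ) :
    Fomega n Ω (Fomega n Ω a) w = a w := by
  set g := fun ξ => Complex.exp (Complex.I * ((ξ ⬝ᵥ w : ℝ) : ℂ)) * fourierDot a ξ
  have hphase : ∀ u, Complex.exp (-Complex.I * ((symplForm Ω w u : ℝ) : ℂ)) * Fomega n Ω a u =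
      ((((2 * Real.pi) ^ n : ℝ)⁻¹ : ℝ) : ℂ) * (((Real.sqrt |Ω.det|)⁻¹ : ℝ) : ℂ) *
        g (u ᵥ* Ω⁻¹) := by
    intro u
    rw [Fomega_eq_fourierDot, symplForm_antisymm hΩ hanti, symplForm_eq_vecMul_dotProduct,
      Complex.ofReal_neg, neg_mul_neg]
    ring
  have hΩinv : IsUnit (Ω⁻¹).det := (Matrix.isUnit_nonsing_inv_det_iff).mpr hΩ
  rw [Fomega]
  simp_rw [hphase]
  rw [integral_const_mul, integral_comp_vecMul hΩinv, integral_exp_dotProduct_mul_fourierDot]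
  have hdet : |(Ω⁻¹).det|⁻¹ = Real.sqrt |Ω.det| ^ 2 := by
    rw [Matrix.det_nonsing_inv, Ring.inverse_eq_inv', abs_inv, inv_inv,
      Real.sq_sqrt (abs_nonneg _)]
  have hsqrt : ((Real.sqrt |Ω.det| : ℝ) : ℂ) ≠ 0 :=
    Complex.ofReal_ne_zero.mpr (Real.sqrt_ne_zero'.mpr (abs_pos.mpr hΩ.ne_zero))
  rw [hdet, Complex.real_smul, pow_mul']
  push_cast
  field_simp

lemma exp_mul_Akernel_midpoint {m : ℕ} (n : ℕ) {Ω : Matrix (Fin m) (Fin m) ℝ} (hΩ : IsUnit Ω.det)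
    (hanti : Ωᵀ = -Ω) (f : (Fin m → ℝ) → ℂ) (z ζ x : Fin m → ℝ) :
    Complex.exp (-Complex.I * ((ζ ⬝ᵥ x : ℝ) : ℂ)) *
        Akernel n Ω f (z + (1/2 : ℝ) • x) (z - (1/2 : ℝ) • x) =
      (((2 / Real.pi) ^ n : ℝ) : ℂ) * (((Real.sqrt |Ω.det|)⁻¹ : ℝ) : ℂ) *
        (Complex.exp (-Complex.I *
            ((symplForm Ω (z - (1/2 : ℝ) • (Ω *ᵥ ζ)) ((2 : ℝ) • x) : ℝ) : ℂ)) *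
          Fomega n Ω f ((2 : ℝ) • x)) := by
  have hx : (z + (1/2 : ℝ) • x) - (z - (1/2 : ℝ) • x) = x := by module
  have hexp : Complex.exp (-Complex.I * ((ζ ⬝ᵥ x : ℝ) : ℂ)) *
      Complex.exp (2 * Complex.I * ((-symplForm Ω z x : ℝ) : ℂ)) =
      Complex.exp (-Complex.I *
        ((symplForm Ω (z - (1/2 : ℝ) • (Ω *ᵥ ζ)) ((2 : ℝ) • x) : ℝ) : ℂ)) := by
    rw [← Complex.exp_add, ← dotProduct_add_two_mul_symplForm hΩ hanti]
    push_cast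
    ring_nf
  rw [Akernel, hx, symplForm_add_smul_sub_smul hΩ hanti, ← hexp]
  ring

theorem stmt5_general (n : ℕ)
    (Ω : Matrix (Fin (2 * n)) (Fin (2 * n)) ℝ)
    (hΩ : IsUnit Ω.det) (hanti : Ωᵀ = -Ω)
    (a : SchwartzMap (Fin (2 * n) → ℝ) ℂ) (z ζ : Fin (2 * n) → ℝ) :
    ∫ ζ' : Fin (2 * n) → ℝ,
        Complex.exp (-Complex.I * ((ζ ⬝ᵥ ζ' : ℝ) : ℂ)) *
          Akernel n Ω (fun w => a w) (z + (1/2 : ℝ) • ζ') (z - (1/2 : ℝ) • ζ')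
      = a (z - (1/2 : ℝ) • (Ω *ᵥ ζ)) := by
  have hinvol := Fomega_Fomega hΩ hanti a (z - (1/2 : ℝ) • (Ω *ᵥ ζ))
  rw [Fomega] at hinvol
  set w := z - (1/2 : ℝ) • (Ω *ᵥ ζ)
  set g := fun u => Complex.exp (-Complex.I * ((symplForm Ω w u : ℝ) : ℂ)) * Fomega n Ω a u
  have hc : (2 / Real.pi) ^ n * ((2 : ℝ) ^ (2 * n))⁻¹ = ((2 * Real.pi) ^ n)⁻¹ := by
    rw [pow_mul', div_pow, mul_pow]
    field_simp
  simp_rw [exp_mul_Akernel_midpoint n hΩ hanti]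
  rw [integral_const_mul, Measure.integral_comp_smul volume g, ← hinvol, Module.finrank_fin_fun,
    abs_inv, abs_pow, abs_two, Complex.real_smul, ← hc]
  push_cast
  ring

/-- the Weyl symbol of `Ã_ω`, obtained from its kernel by the partial
Fourier transform in the second variable, equals `a(z − (1/2)Ωζ)`:
`∫ e^{-iζ·ζ'} K(z + ζ'/2, z − ζ'/2) dζ' = a(z − (1/2)Ωζ)`. -/
theorem stmt5 (n : ℕ) (hn : 1 ≤ n)
    (Ω : Matrix (Fin (2 * n)) (Fin (2 * n)) ℝ)
    (hΩ : IsUnit Ω.det) (hanti : Ωᵀ = -Ω)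
    (a : SchwartzMap (Fin (2 * n) → ℝ) ℂ) (z ζ : Fin (2 * n) → ℝ) :
    ∫ ζ' : Fin (2 * n) → ℝ,
        Complex.exp (-Complex.I * ((ζ ⬝ᵥ ζ' : ℝ) : ℂ)) *
          Akernel n Ω (fun w => a w) (z + (1/2 : ℝ) • ζ') (z - (1/2 : ℝ) • ζ')
      = a (z - (1/2 : ℝ) • (Ω *ᵥ ζ)) :=
  stmt5_general n Ω hΩ hanti a z ζ
end

section
/- Let n ≥ 1, let Ω be a real invertible antisymmetric 2n×2n matrix, and let f be an invertible real 2n×2n matrix with Ω = f J fᵀ, where J = [[0,I],[−I,0]]. Let a, U ∈ 𝒮(ℝ^{2n}). Then M_f(Ã_ω U) = Ã'(M_f U) pointwise on ℝ^{2n}, where Ã_ω is the phase-space operator associated with Ω and symbol a, and Ã' is the phase-space operator associated with Ω = J and symbol a' = a ∘ f (i.e. a'(z) = a(fz)). -/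
/-!
The substitution `z₀ = f w` carries `ω` to `σ`, because `fᵀ Ω⁻¹ f = J⁻¹`, and its Jacobian
`|det f|` is exactly absorbed by the normalisation, since `√|det Ω| = |det f| √|det J|`.
Applied to `F_ω a` and then to the integral defining `Ã_ω`, this gives
`Ã_ω U (f z) = Ã' (U ∘ f) z`; `M_f` only adds the constant factor `√|det f|` on both sides.
-/

open MeasureTheory Matrix

/-- The standard symplectic matrix `J = [[0, I], [−I, 0]]` of size `2n × 2n`. -/
def Jmat (n : ℕ) : Matrix (Fin (2 * n)) (Fin (2 * n)) ℝ := fun i j =>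
  if (i : ℕ) + n = (j : ℕ) then 1 else if (j : ℕ) + n = (i : ℕ) then -1 else 0

/-- The phase-space operator `Ã_ω` with symbol `a`. -/
noncomputable def Atilde {m : ℕ} (n : ℕ) (Ω : Matrix (Fin m) (Fin m) ℝ)
    (a U : (Fin m → ℝ) → ℂ) (z : Fin m → ℝ) : ℂ :=
  ((((2 * Real.pi) ^ n : ℝ)⁻¹ : ℝ) : ℂ) * (((Real.sqrt |Ω.det|)⁻¹ : ℝ) : ℂ) *
    ∫ z₀ : Fin m → ℝ, Fomega n Ω a z₀ *
      Complex.exp (-Complex.I * ((symplForm Ω z z₀ : ℝ) : ℂ)) * U (z - (1/2 : ℝ) • z₀)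

/-- The unitary rescaling operator `M_f U(z) = |det f|^{1/2} U(fz)`. -/
noncomputable def Mf {m : ℕ} (f : Matrix (Fin m) (Fin m) ℝ)
    (U : (Fin m → ℝ) → ℂ) (z : Fin m → ℝ) : ℂ :=
  ((Real.sqrt |f.det| : ℝ) : ℂ) * U (f *ᵥ z)

theorem integral_comp_linearMap {E F : Type*} [NormedAddCommGroup E] [NormedSpace ℝ E]
    [MeasurableSpace E] [BorelSpace E] [FiniteDimensional ℝ E] (μ : Measure E)
    [μ.IsAddHaarMeasure] [NormedAddCommGroup F] [NormedSpace ℝ F] {f : E →ₗ[ℝ] E}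
    (hf : LinearMap.det f ≠ 0) (g : E → F) :
    ∫ x, g (f x) ∂μ = |LinearMap.det f|⁻¹ • ∫ y, g y ∂μ := by
  let e : E ≃ᵐ E :=
    (f.equivOfDetNeZero hf).toContinuousLinearEquiv.toHomeomorph.toMeasurableEquiv
  have he : ⇑e = f := rfl
  rw [← he, ← integral_map_equiv e g, he, Measure.map_linearMap_addHaar_eq_smul_addHaar μ hf,
    integral_smul_measure, ENNReal.toReal_ofReal (abs_nonneg _), abs_inv]

theorem Matrix.integral_comp_mulVec {m : ℕ} {F : Type*} [NormedAddCommGroup F] [NormedSpace ℝ F]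
    {M : Matrix (Fin m) (Fin m) ℝ} (hM : M.det ≠ 0) (g : (Fin m → ℝ) → F) :
    ∫ x, g (M *ᵥ x) = |M.det|⁻¹ • ∫ y, g y := by
  rw [← LinearMap.det_toLin'] at hM ⊢
  exact integral_comp_linearMap volume hM g

theorem symplForm_mulVec_mulVec {m : ℕ} {Ω J f : Matrix (Fin m) (Fin m) ℝ}
    (hf : IsUnit f.det) (hfJ : Ω = f * J * fᵀ) (z z' : Fin m → ℝ) :
    symplForm Ω (f *ᵥ z) (f *ᵥ z') = symplForm J z z' := by
  have hft : IsUnit fᵀ.det := by rwa [det_transpose]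
  have hinv : fᵀ * Ω⁻¹ * f = J⁻¹ := by
    rw [hfJ, Matrix.mul_inv_rev, Matrix.mul_inv_rev, ← mul_assoc, mul_nonsing_inv _ hft,
      one_mul, mul_assoc, nonsing_inv_mul _ hf, mul_one]
  rw [symplForm, symplForm, mulVec_mulVec, dotProduct_mulVec, dotProduct_mulVec,
    ← vecMul_transpose, vecMul_vecMul, ← hinv, mul_assoc]

theorem sqrt_abs_det_of_eq_mul_mul_transpose {m : ℕ} {Ω J f : Matrix (Fin m) (Fin m) ℝ}
    (hfJ : Ω = f * J * fᵀ) :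
    Real.sqrt |Ω.det| = |f.det| * Real.sqrt |J.det| := by
  rw [hfJ, det_mul, det_mul, det_transpose, abs_mul, abs_mul, mul_right_comm, ← abs_mul,
    ← sq, Real.sqrt_mul (abs_nonneg _), abs_sq, Real.sqrt_sq_eq_abs]

theorem inv_sqrt_abs_det_mul_integral_comp_mulVec {m : ℕ} {Ω J f : Matrix (Fin m) (Fin m) ℝ}
    (hf : IsUnit f.det) (hfJ : Ω = f * J * fᵀ) (g : (Fin m → ℝ) → ℂ) :
    (((Real.sqrt |Ω.det|)⁻¹ : ℝ) : ℂ) * ∫ x, g x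
      = (((Real.sqrt |J.det|)⁻¹ : ℝ) : ℂ) * ∫ w, g (f *ᵥ w) := by
  have hf₀ : ((|f.det| : ℝ) : ℂ) ≠ 0 := by exact_mod_cast abs_ne_zero.2 hf.ne_zero
  rw [Matrix.integral_comp_mulVec hf.ne_zero, sqrt_abs_det_of_eq_mul_mul_transpose hfJ,
    Complex.real_smul]
  push_cast
  field_simp

theorem Fomega_mulVec (n : ℕ) {m : ℕ} {Ω J f : Matrix (Fin m) (Fin m) ℝ}
    (hf : IsUnit f.det) (hfJ : Ω = f * J * fᵀ) (a : (Fin m → ℝ) → ℂ) (z : Fin m → ℝ) :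
    Fomega n Ω a (f *ᵥ z) = Fomega n J (fun w => a (f *ᵥ w)) z := by
  rw [Fomega, Fomega, mul_assoc, mul_assoc, inv_sqrt_abs_det_mul_integral_comp_mulVec hf hfJ]
  simp only [symplForm_mulVec_mulVec hf hfJ]

theorem Atilde_mulVec (n : ℕ) {m : ℕ} {Ω J f : Matrix (Fin m) (Fin m) ℝ}
    (hf : IsUnit f.det) (hfJ : Ω = f * J * fᵀ) (a U : (Fin m → ℝ) → ℂ) (z : Fin m → ℝ) :
    Atilde n Ω a U (f *ᵥ z) = Atilde n J (fun w => a (f *ᵥ w)) (fun w => U (f *ᵥ w)) z := by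
  rw [Atilde, Atilde, mul_assoc, mul_assoc, inv_sqrt_abs_det_mul_integral_comp_mulVec hf hfJ]
  simp only [Fomega_mulVec n hf hfJ, symplForm_mulVec_mulVec hf hfJ, mulVec_sub, mulVec_smul]

theorem Atilde_const_mul (n : ℕ) {m : ℕ} (Ω : Matrix (Fin m) (Fin m) ℝ)
    (a U : (Fin m → ℝ) → ℂ) (c : ℂ) (z : Fin m → ℝ) :
    Atilde n Ω a (fun w => c * U w) z = c * Atilde n Ω a U z := by
  simp only [Atilde, mul_left_comm _ c, integral_const_mul]

theorem stmt9_general (n : ℕ)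
    (Ω : Matrix (Fin (2 * n)) (Fin (2 * n)) ℝ)
    (f : Matrix (Fin (2 * n)) (Fin (2 * n)) ℝ)
    (hf : IsUnit f.det) (hfJ : Ω = f * Jmat n * fᵀ)
    (a U : SchwartzMap (Fin (2 * n) → ℝ) ℂ) (z : Fin (2 * n) → ℝ) :
    Mf f (Atilde n Ω (fun w => a w) (fun w => U w)) z
      = Atilde n (Jmat n) (fun w => a (f *ᵥ w)) (Mf f (fun w => U w)) z := by
  unfold Mf
  rw [Atilde_const_mul, Atilde_mulVec n hf hfJ]

/-- if `Ω = f J fᵀ` then `M_f(Ã_ω U) = Ã'(M_f U)`, where `Ã'` is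
the phase-space operator associated with `Ω = J` and symbol `a' = a ∘ f`. -/
theorem stmt9 (n : ℕ) (hn : 1 ≤ n)
    (Ω : Matrix (Fin (2 * n)) (Fin (2 * n)) ℝ)
    (hΩ : IsUnit Ω.det) (hanti : Ωᵀ = -Ω)
    (f : Matrix (Fin (2 * n)) (Fin (2 * n)) ℝ)
    (hf : IsUnit f.det) (hfJ : Ω = f * Jmat n * fᵀ)
    (a U : SchwartzMap (Fin (2 * n) → ℝ) ℂ) (z : Fin (2 * n) → ℝ) :
    Mf f (Atilde n Ω (fun w => a w) (fun w => U w)) z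
      = Atilde n (Jmat n) (fun w => a (f *ᵥ w)) (Mf f (fun w => U w)) z :=
  stmt9_general n Ω f hf hfJ a U z
end
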